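/- arXiv:2502.07863 — 5 statements merged into one kernel-verified Lean document; each statement's English description precedes it below -/
import Mathlib

section
/- Assume MD, SCD*, the boundary assumptions, and that φ(b,t1) ≤ φ(b',t1) whenever b ⊆ b'. Suppose the union quantity condition holds: for all nonempty bundles b_1, b_2, t_{b_1∪b_2} ≤ max{t_{b_1}, t_{b_2}} (equivalently, the sold-alone quantity of b_1∪b_2 is at least the minimum of those of b_1 and b_2). Then: (i) the minimal optimal menu is a nested menu; and (ii) if b_1⋆,…,b_N⋆ (with N = 2^n − 1) enumerates all nonempty bundles so that t_{b_1⋆} ≤ t_{b_2⋆} ≤ ⋯ ≤ t_{b_N⋆}, then the nested menu {∅, b_1⋆, b_1⋆∪b_2⋆, …, b_1⋆∪⋯∪b_N⋆} is an optimal menu. -/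
/-!
Splitting coefficients into positive and negative parts and padding with `∅` shows that SCD*
makes every linear combination of virtual values single-crossing; so no combination is positive,
nonpositive, positive at three increasing types.

(i) Let `b1, b2` be incomparable members of a minimal optimal menu with `t_{b1} ≤ t_{b2}`, and let
`s` be a type at which `b2` is the strict best item of the menu. By the union condition and MD,
`b1 ∪ b2` does at least as well as `b2` from `t_{b2}` on, and the two tie at `s`. At a type where
they differ, `φ (b1 ∪ b2) - φ b2` combines either with `φ b1 - φ b2` (which is positive at
`t_{b2}` and negative at `s`) or with `φ c - φ b2` for a menu item `c` taking over from `b2`, into a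
combination with two sign changes. Hence `b1 ∪ b2` and `b2` have the same virtual value, so they
are equal and `b1 ⊆ b2`.

(ii) The same domination argument shows that a nonempty bundle `b` is weakly beaten above `t_b`
by the prefix union containing it, whose threshold is at most `t_b` by the union condition.
-/

namespace Paper

abbrev Bundle (n : ℕ) := Finset (Fin n)

variable {n : ℕ}

/-- A stochastic bundle: nonnegative weights on bundles summing to one. -/
def IsStoch (a : Bundle n → ℝ) : Prop :=
  (∀ b, 0 ≤ a b) ∧ ∑ b, a b = 1

/-- The point mass at a bundle, viewed as a stochastic bundle. -/
def pt (b : Bundle n) : Bundle n → ℝ := fun b' => if b' = b then 1 else 0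

/-- Virtual value of a stochastic bundle (linear extension). -/
def phiA (φ : Bundle n → ℝ → ℝ) (a : Bundle n → ℝ) (t : ℝ) : ℝ :=
  ∑ b, a b * φ b t

/-- A function is single-crossing on a set: its sign is monotone there. -/
def SingleCrossingOn (g : ℝ → ℝ) (T : Set ℝ) : Prop :=
  MonotoneOn (fun t => Real.sign (g t)) T ∨ AntitoneOn (fun t => Real.sign (g t)) T

/-- Assumption SCD*: differences of virtual values of stochastic bundles are
single-crossing in the type. -/
def SCDstar (φ : Bundle n → ℝ → ℝ) (t0 t1 : ℝ) : Prop :=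
  ∀ a a' : Bundle n → ℝ, IsStoch a → IsStoch a' →
    SingleCrossingOn (fun t => phiA φ a t - phiA φ a' t) (Set.Icc t0 t1)

/-- Assumption MD: differences of virtual values of deterministic bundles are
monotone in the type. -/
def MD (φ : Bundle n → ℝ → ℝ) (t0 t1 : ℝ) : Prop :=
  ∀ b b' : Bundle n,
    MonotoneOn (fun t => φ b t - φ b' t) (Set.Icc t0 t1) ∨
    AntitoneOn (fun t => φ b t - φ b' t) (Set.Icc t0 t1)

/-- No two distinct bundles have identical virtual value functions on T. -/
def Distinct (φ : Bundle n → ℝ → ℝ) (t0 t1 : ℝ) : Prop :=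
  ∀ b b' : Bundle n, b ≠ b' → ∃ t ∈ Set.Icc t0 t1, φ b t ≠ φ b' t

/-- A stochastic bundle is very weakly dominated. -/
def VWD (φ : Bundle n → ℝ → ℝ) (t0 t1 : ℝ) (a : Bundle n → ℝ) : Prop :=
  ∃ a' : Bundle n → ℝ, IsStoch a' ∧ a' ≠ a ∧
    ∀ t ∈ Set.Icc t0 t1, phiA φ a t ≤ phiA φ a' t

/-- A bundle is a never strict best response. -/
def NeverStrictBR (φ : Bundle n → ℝ → ℝ) (t0 t1 : ℝ) (b : Bundle n) : Prop :=
  ∀ t ∈ Set.Icc t0 t1, ∃ b' : Bundle n, b' ≠ b ∧ φ b t ≤ φ b' t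

/-- A menu is optimal if at every type some element attains the upper envelope. -/
def OptimalMenu (φ : Bundle n → ℝ → ℝ) (t0 t1 : ℝ) (S : Finset (Bundle n)) : Prop :=
  ∀ t ∈ Set.Icc t0 t1, ∃ b ∈ S, ∀ b' : Bundle n, φ b' t ≤ φ b t

/-- A minimal optimal menu. -/
def MinimalOptimalMenu (φ : Bundle n → ℝ → ℝ) (t0 t1 : ℝ) (S : Finset (Bundle n)) : Prop :=
  OptimalMenu φ t0 t1 S ∧ ∀ S' : Finset (Bundle n), S' ⊂ S → ¬ OptimalMenu φ t0 t1 S'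

/-- A nested menu: any two elements are comparable under set inclusion. -/
def IsNestedMenu (S : Finset (Bundle n)) : Prop :=
  ∀ b1 ∈ S, ∀ b2 ∈ S, b1 ⊆ b2 ∨ b2 ⊆ b1

/-- A tree menu: a nonempty root contained in every nonempty element, and two
incomparable elements. -/
def IsTreeMenu (S : Finset (Bundle n)) : Prop :=
  (∃ r ∈ S, r ≠ (∅ : Bundle n) ∧ ∀ b ∈ S, b ≠ (∅ : Bundle n) → r ⊆ b) ∧
  (∃ b1 ∈ S, ∃ b2 ∈ S, ¬ b1 ⊆ b2 ∧ ¬ b2 ⊆ b1)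

open Set Filter

lemma Real.sign_mul_of_pos {k x : ℝ} (hk : 0 < k) : Real.sign (k * x) = Real.sign x := by
  rcases lt_trichotomy x 0 with h | rfl | h
  · rw [Real.sign_of_neg h, Real.sign_of_neg (mul_neg_of_pos_of_neg hk h)]
  · rw [mul_zero]
  · rw [Real.sign_of_pos h, Real.sign_of_pos (mul_pos hk h)]

namespace SingleCrossingOn

variable {f g : ℝ → ℝ} {T : Set ℝ}

lemma congr_sign (hf : SingleCrossingOn f T)
    (h : EqOn (fun t => Real.sign (f t)) (fun t => Real.sign (g t)) T) :
    SingleCrossingOn g T :=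
  hf.imp (·.congr h) (·.congr h)

lemma false_of_pos_nonpos_pos (hg : SingleCrossingOn g T) {p q r : ℝ}
    (hp : p ∈ T) (hq : q ∈ T) (hr : r ∈ T) (hpq : p ≤ q) (hqr : q ≤ r)
    (hgp : 0 < g p) (hgq : g q ≤ 0) (hgr : 0 < g r) : False := by
  have hsq : Real.sign (g q) ≤ 0 := by
    rcases hgq.lt_or_eq with h | h
    · rw [Real.sign_of_neg h]; norm_num
    · rw [h, Real.sign_zero]
  rcases hg with hm | hm
  · have := hm hp hq hpq
    simp only [Real.sign_of_pos hgp] at this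
    linarith
  · have := hm hq hr hqr
    simp only [Real.sign_of_pos hgr] at this
    linarith

end SingleCrossingOn

lemma eventually_lt_mul_atTop {a b : ℝ} (h : 0 < a ∨ 0 ≤ a ∧ b < 0) :
    ∀ᶠ z in atTop, b < z * a := by
  rcases h with ha | ⟨ha, hb⟩
  · exact (tendsto_id.atTop_mul_const ha).eventually_gt_atTop b
  · filter_upwards [eventually_ge_atTop 0] with z hz
    nlinarith [mul_nonneg hz ha]

lemma phiA_sub_phiA (φ : Bundle n → ℝ → ℝ) (a a' : Bundle n → ℝ) (t : ℝ) :
    phiA φ a t - phiA φ a' t = ∑ b, (a b - a' b) * φ b t := by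
  simp only [phiA, ← Finset.sum_sub_distrib, sub_mul]

section

variable {φ : Bundle n → ℝ → ℝ} {t0 t1 : ℝ} {tz : Bundle n → ℝ}

/-- Splitting the coefficients into positive and negative parts and padding both with weight on
`∅` exhibits a positive multiple of the combination as a difference of stochastic bundles. -/
lemma SCDstar.singleCrossingOn_of_mem_span
    (hscd : SCDstar φ t0 t1) (hempty : ∀ t ∈ Icc t0 t1, φ ∅ t = 0) {f : ℝ → ℝ}
    (hf : f ∈ Submodule.span ℝ (range φ)) : SingleCrossingOn f (Icc t0 t1) := by
  obtain ⟨c, rfl⟩ := (Submodule.mem_span_range_iff_exists_fun ℝ).1 hf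
  set P := ∑ b, max (c b) 0
  set N := ∑ b, max (-c b) 0
  have hP : 0 ≤ P := Finset.sum_nonneg fun b _ => le_max_right _ _
  have hN : 0 ≤ N := Finset.sum_nonneg fun b _ => le_max_right _ _
  set M := P + N + 1
  have hM : 0 < M := by positivity
  let pad : (Bundle n → ℝ) → ℝ → Bundle n → ℝ := fun d m b => (d b + (M - m) * pt ∅ b) / M
  have hstoch : ∀ d : Bundle n → ℝ, (∀ b, 0 ≤ d b) → ∑ b, d b ≤ M →
      IsStoch (pad d (∑ b, d b)) := by
    intro d hd hdM
    refine ⟨fun b => div_nonneg (add_nonneg (hd b) (mul_nonneg (by linarith) ?_)) hM.le, ?_⟩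
    · unfold pt; split_ifs <;> norm_num
    · simp only [pad, ← Finset.sum_div, Finset.sum_add_distrib, ← Finset.mul_sum, pt,
        Finset.sum_ite_eq', Finset.mem_univ, if_true]
      field_simp
      ring
  refine (hscd _ _ (hstoch (fun b => max (c b) 0) (fun b => le_max_right _ _) (by linarith))
    (hstoch (fun b => max (-c b) 0) (fun b => le_max_right _ _) (by linarith))).congr_sign
    fun t ht => ?_
  have key : phiA φ (pad (fun b => max (c b) 0) P) t
      - phiA φ (pad (fun b => max (-c b) 0) N) t = M⁻¹ * (∑ b, c b • φ b) t := by
    have hdiff : ∀ b, pad (fun b => max (c b) 0) P b - pad (fun b => max (-c b) 0) N b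
        = M⁻¹ * (c b + (N - P) * pt ∅ b) := fun b => by
      rw [div_sub_div_same, div_eq_inv_mul]
      linear_combination M⁻¹ * max_zero_sub_max_neg_zero_eq_self (c b)
    simp only [phiA_sub_phiA, hdiff, Finset.sum_apply, Pi.smul_apply, smul_eq_mul, pt,
      mul_assoc, ← Finset.mul_sum, add_mul, Finset.sum_add_distrib, ite_mul, one_mul, zero_mul,
      Finset.sum_ite_eq', Finset.mem_univ, if_true, hempty t ht, mul_zero, add_zero]
  dsimp only
  rw [key, Real.sign_mul_of_pos (inv_pos.2 hM)]

lemma sub_mem_span (φ : Bundle n → ℝ → ℝ) (b b' : Bundle n) :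
    φ b - φ b' ∈ Submodule.span ℝ (range φ) :=
  sub_mem (Submodule.subset_span ⟨b, rfl⟩) (Submodule.subset_span ⟨b', rfl⟩)

/-- For `z` large, `z • f - h` would be positive at `p` and `r` but not at `q`. -/
lemma SCDstar.false_of_three_point (hscd : SCDstar φ t0 t1)
    (hempty : ∀ t ∈ Icc t0 t1, φ ∅ t = 0) {f h : ℝ → ℝ}
    (hf : f ∈ Submodule.span ℝ (range φ)) (hh : h ∈ Submodule.span ℝ (range φ)) {p q r : ℝ}
    (hp : p ∈ Icc t0 t1) (hq : q ∈ Icc t0 t1) (hr : r ∈ Icc t0 t1)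
    (hpq : p ≤ q) (hqr : q ≤ r)
    (hfq : f q ≤ 0) (hhq : 0 ≤ h q)
    (hfp : 0 < f p ∨ 0 ≤ f p ∧ h p < 0) (hfr : 0 < f r ∨ 0 ≤ f r ∧ h r < 0) : False := by
  obtain ⟨z, hzp, hzr, hz⟩ := ((eventually_lt_mul_atTop hfp).and
    ((eventually_lt_mul_atTop hfr).and (eventually_ge_atTop 0))).exists
  refine (hscd.singleCrossingOn_of_mem_span hempty
    (sub_mem (Submodule.smul_mem _ z hf) hh)).false_of_pos_nonpos_pos hp hq hr hpq hqr ?_ ?_ ?_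
  all_goals simp only [Pi.sub_apply, Pi.smul_apply, smul_eq_mul]
  · linarith
  · nlinarith [mul_nonpos_of_nonneg_of_nonpos hz hfq]
  · linarith

lemma MinimalOptimalMenu.exists_forall_lt {S : Finset (Bundle n)}
    (hS : MinimalOptimalMenu φ t0 t1 S) {b : Bundle n} (hb : b ∈ S) :
    ∃ s ∈ Icc t0 t1, (∀ b', φ b' s ≤ φ b s) ∧ ∀ c ∈ S, c ≠ b → φ c s < φ b s := by
  have hnot := hS.2 (S.erase b) (Finset.erase_ssubset hb)
  simp only [OptimalMenu, not_forall, not_exists, not_and, not_le] at hnot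
  obtain ⟨s, hs, hfail⟩ := hnot
  obtain ⟨c, hcS, hc⟩ := hS.1 s hs
  obtain rfl : c = b := by
    by_contra hcb
    obtain ⟨b', hb'⟩ := hfail c (Finset.mem_erase.2 ⟨hcb, hcS⟩)
    exact (hc b').not_gt hb'
  refine ⟨s, hs, hc, fun d hdS hdc => ?_⟩
  obtain ⟨b', hb'⟩ := hfail d (Finset.mem_erase.2 ⟨hdc, hdS⟩)
  exact hb'.trans_le (hc b')

/-- `[p, r]` is connected and covered by two closed sets: where `u` does not beat `b`, and where
some other menu item is at least as good as `b` (which includes every type where `u` beats `b`). -/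
lemma OptimalMenu.exists_ne_le_of_lt_of_le {S : Finset (Bundle n)}
    (hS : OptimalMenu φ t0 t1 S)
    (hcont : ∀ b, ContinuousOn (φ b) (Icc t0 t1)) {b u : Bundle n} {p r : ℝ}
    (hp : p ∈ Icc t0 t1) (hr : r ∈ Icc t0 t1) (hpr : p ≤ r)
    (hbp : φ b p < φ u p) (hbr : φ u r ≤ φ b r) :
    ∃ q ∈ Icc p r, φ u q ≤ φ b q ∧ ∃ c ∈ S, c ≠ b ∧ φ b q ≤ φ c q := by
  have hsub : Icc p r ⊆ Icc t0 t1 := Icc_subset_Icc hp.1 hr.2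
  set K := Icc t0 t1 ∩ (φ u - φ b) ⁻¹' Iic 0
  set A := ⋃ c ∈ S.erase b, Icc t0 t1 ∩ (φ b - φ c) ⁻¹' Iic 0
  have hK : IsClosed K :=
    ((hcont u).sub (hcont b)).preimage_isClosed_of_isClosed isClosed_Icc isClosed_Iic
  have hA : IsClosed A := isClosed_biUnion_finset fun c _ =>
    ((hcont b).sub (hcont c)).preimage_isClosed_of_isClosed isClosed_Icc isClosed_Iic
  have hbeaten : ∀ t ∈ Icc p r, φ b t < φ u t → t ∈ A := fun t ht hlt => by
    obtain ⟨c, hcS, hc⟩ := hS t (hsub ht)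
    have hcb : c ≠ b := by rintro rfl; exact (hc u).not_gt hlt
    exact mem_biUnion (Finset.mem_erase.2 ⟨hcb, hcS⟩) ⟨hsub ht, sub_nonpos.2 (hc b)⟩
  have hcover : Icc p r ⊆ A ∪ K := fun t ht => by
    by_cases h : φ b t < φ u t
    · exact Or.inl (hbeaten t ht h)
    · exact Or.inr ⟨hsub ht, sub_nonpos.2 (not_lt.1 h)⟩
  obtain ⟨q, hq, hqA, hqK⟩ := isPreconnected_closed_iff.1 isPreconnected_Icc A K hA hK hcover
    ⟨p, left_mem_Icc.2 hpr, hbeaten p (left_mem_Icc.2 hpr) hbp⟩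
    ⟨r, right_mem_Icc.2 hpr, hr, sub_nonpos.2 hbr⟩
  obtain ⟨c, hc, -, hcq⟩ := mem_iUnion₂.1 hqA
  exact ⟨q, hq, sub_nonpos.1 hqK.2, c, Finset.mem_of_mem_erase hc, Finset.ne_of_mem_erase hc,
    sub_nonpos.1 hcq⟩

/-- The boundary assumptions; `tz b` is the paper's `t_b`. -/
structure Boundary (φ : Bundle n → ℝ → ℝ) (t0 t1 : ℝ) (tz : Bundle n → ℝ) : Prop where
  lt : t0 < t1
  empty : ∀ t ∈ Icc t0 t1, φ ∅ t = 0
  neg : ∀ b : Bundle n, b ≠ ∅ → φ b t0 < 0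
  pos : ∀ b : Bundle n, b ≠ ∅ → 0 < φ b t1
  tz_mem : ∀ b : Bundle n, b ≠ ∅ → tz b ∈ Ioo t0 t1
  tz_zero : ∀ b : Bundle n, b ≠ ∅ → φ b (tz b) = 0
  tz_uniq : ∀ b : Bundle n, b ≠ ∅ → ∀ s ∈ Icc t0 t1, φ b s = 0 → s = tz b

namespace Boundary

lemma tz_mem_Icc (hbd : Boundary φ t0 t1 tz) {b : Bundle n} (hb : b ≠ ∅) :
    tz b ∈ Icc t0 t1 :=
  Ioo_subset_Icc_self (hbd.tz_mem b hb)

lemma monotoneOn (hbd : Boundary φ t0 t1 tz) (hmd : MD φ t0 t1) {b : Bundle n} (hb : b ≠ ∅) :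
    MonotoneOn (φ b) (Icc t0 t1) := by
  have h0 : t0 ∈ Icc t0 t1 := left_mem_Icc.2 hbd.lt.le
  have h1 : t1 ∈ Icc t0 t1 := right_mem_Icc.2 hbd.lt.le
  rcases hmd b ∅ with hm | hm
  · intro x hx y hy hxy
    simpa only [hbd.empty x hx, hbd.empty y hy, sub_zero] using hm hx hy hxy
  · have := hm h0 h1 hbd.lt.le
    simp only [hbd.empty t0 h0, hbd.empty t1 h1, sub_zero] at this
    exact absurd this (hbd.neg b hb |>.trans (hbd.pos b hb)).not_ge

lemma tz_lt_of_pos (hbd : Boundary φ t0 t1 tz) (hmd : MD φ t0 t1) {b : Bundle n} (hb : b ≠ ∅)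
    {t : ℝ} (ht : t ∈ Icc t0 t1) (hpos : 0 < φ b t) : tz b < t :=
  lt_of_not_ge fun h =>
    (hbd.tz_zero b hb ▸ hbd.monotoneOn hmd hb ht (hbd.tz_mem_Icc hb) h).not_gt hpos

lemma nonneg_of_tz_le (hbd : Boundary φ t0 t1 tz) (hmd : MD φ t0 t1) {b : Bundle n} (hb : b ≠ ∅)
    {t : ℝ} (ht : t ∈ Icc t0 t1) (h : tz b ≤ t) : 0 ≤ φ b t :=
  hbd.tz_zero b hb ▸ hbd.monotoneOn hmd hb (hbd.tz_mem_Icc hb) ht h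

lemma empty_mem (hbd : Boundary φ t0 t1 tz) {S : Finset (Bundle n)}
    (hS : OptimalMenu φ t0 t1 S) : (∅ : Bundle n) ∈ S := by
  have h0 : t0 ∈ Icc t0 t1 := left_mem_Icc.2 hbd.lt.le
  obtain ⟨b, hbS, hb⟩ := hS t0 h0
  by_contra hne
  have hb0 : b ≠ ∅ := by rintro rfl; exact hne hbS
  exact (hbd.neg b hb0).not_ge (hbd.empty t0 h0 ▸ hb ∅)

/-- By MD, `φ B - φ b` is nondecreasing from `tz b` or nonincreasing up to `t1`, and it is
nonnegative at both ends. -/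
lemma le_of_tz_le (hbd : Boundary φ t0 t1 tz) (hmd : MD φ t0 t1) {b B : Bundle n}
    (hb : b ≠ ∅) (hB : B ≠ ∅) (htz : tz B ≤ tz b) (htop : φ b t1 ≤ φ B t1) {t : ℝ}
    (ht : t ∈ Icc t0 t1) (hbt : tz b ≤ t) : φ b t ≤ φ B t := by
  rcases hmd B b with hm | hm
  · have h1 := hm (hbd.tz_mem_Icc hb) ht hbt
    have h2 := hbd.nonneg_of_tz_le hmd hB (hbd.tz_mem_Icc hb) htz
    simp only [hbd.tz_zero b hb] at h1
    linarith
  · have := hm ht (right_mem_Icc.2 hbd.lt.le) ht.2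
    simp only at this
    linarith

/-- Otherwise both thresholds coincide, so `φ b1 - φ b2` vanishes at `tz b2` and takes both signs
after it, against MD. -/
lemma pos_at_tz (hbd : Boundary φ t0 t1 tz) (hmd : MD φ t0 t1) {b1 b2 : Bundle n}
    (hb1 : b1 ≠ ∅) (hb2 : b2 ≠ ∅) (htz : tz b1 ≤ tz b2) {s1 s2 : ℝ} (hs1 : s1 ∈ Icc t0 t1)
    (hs2 : s2 ∈ Icc t0 t1) (h1 : φ b2 s1 < φ b1 s1) (h1' : 0 < φ b1 s1)
    (h2 : φ b1 s2 < φ b2 s2) (h2' : 0 < φ b2 s2) : 0 < φ b1 (tz b2) := by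
  have hθ := hbd.tz_mem_Icc hb2
  refine (hbd.nonneg_of_tz_le hmd hb1 hθ htz).lt_of_ne' fun h0 => ?_
  have heq : tz b2 = tz b1 := hbd.tz_uniq b1 hb1 _ hθ h0
  have hs1' : tz b2 ≤ s1 := heq ▸ (hbd.tz_lt_of_pos hmd hb1 hs1 h1').le
  have hs2' : tz b2 ≤ s2 := (hbd.tz_lt_of_pos hmd hb2 hs2 h2').le
  have hθ0 := hbd.tz_zero b2 hb2
  rcases hmd b1 b2 with hm | hm
  · have := hm hθ hs2 hs2'
    simp only [h0, hθ0] at this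
    linarith
  · have := hm hθ hs1 hs1'
    simp only [h0, hθ0] at this
    linarith

end Boundary

/-- Wherever `u` and `b` differ, `φ u - φ b` combines with `φ d - φ b`, or with `φ c - φ b` for a
menu item `c` taking over from `b`, into a function with two sign changes. -/
lemma SCDstar.eqOn_of_le_of_isStrictBest (hscd : SCDstar φ t0 t1)
    (hempty : ∀ t ∈ Icc t0 t1, φ ∅ t = 0)
    (hcont : ∀ b, ContinuousOn (φ b) (Icc t0 t1)) {S : Finset (Bundle n)}
    (hS : OptimalMenu φ t0 t1 S) {b u d : Bundle n} {θ s : ℝ} (hθ : θ ∈ Icc t0 t1)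
    (hs : s ∈ Icc t0 t1) (hθs : θ ≤ s) (hu : ∀ t ∈ Icc t0 t1, θ ≤ t → φ b t ≤ φ u t)
    (hus : φ u s ≤ φ b s) (hbest : ∀ c ∈ S, c ≠ b → φ c s < φ b s)
    (hdθ : φ b θ < φ d θ) (hds : φ d s < φ b s) : EqOn (φ u) (φ b) (Icc t0 t1) := by
  intro t ht
  by_contra hne
  have hGs : φ u s = φ b s := le_antisymm hus (hu s hs hθs)
  have hGθ := hu θ hθ le_rfl
  rcases lt_or_gt_of_ne hne with hlt | hgt
  · have htθ : t < θ := lt_of_not_ge fun h => (hu t ht h).not_gt hlt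
    exact hscd.false_of_three_point hempty (sub_mem_span φ b u) (sub_mem_span φ d b) ht hθ hs
      htθ.le hθs (sub_nonpos.2 hGθ) (sub_nonneg.2 hdθ.le) (Or.inl (sub_pos.2 hlt))
      (Or.inr ⟨sub_nonneg.2 hGs.le, sub_neg.2 hds⟩)
  rcases lt_trichotomy t s with hts | rfl | hst
  · obtain ⟨q, hq, huq, c, hcS, hcb, hcq⟩ :=
      hS.exists_ne_le_of_lt_of_le hcont ht hs hts.le hgt hus
    exact hscd.false_of_three_point hempty (sub_mem_span φ u b) (sub_mem_span φ c b) ht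
      (Icc_subset_Icc ht.1 hs.2 hq) hs hq.1 hq.2 (sub_nonpos.2 huq) (sub_nonneg.2 hcq)
      (Or.inl (sub_pos.2 hgt)) (Or.inr ⟨sub_nonneg.2 hGs.ge, sub_neg.2 (hbest c hcS hcb)⟩)
  · exact hne hGs
  · exact hscd.false_of_three_point hempty (sub_mem_span φ u b) (sub_mem_span φ b d) hθ hs ht
      hθs hst.le (sub_nonpos.2 hus) (sub_nonneg.2 hds.le)
      (Or.inr ⟨sub_nonneg.2 hGθ, sub_neg.2 hdθ⟩) (Or.inl (sub_pos.2 hgt))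

/-- Otherwise `b1 ∪ b2 ≠ b2` would do at least as well as `b2` above `tz b2`, and then have the
same virtual value by `SCDstar.eqOn_of_le_of_isStrictBest`, against `Distinct`. -/
lemma subset_or_subset_of_tz_le (hbd : Boundary φ t0 t1 tz) (hmd : MD φ t0 t1)
    (hscd : SCDstar φ t0 t1) (hcont : ∀ b, ContinuousOn (φ b) (Icc t0 t1))
    (hdist : Distinct φ t0 t1) (hmono : ∀ b b' : Bundle n, b ⊆ b' → φ b t1 ≤ φ b' t1)
    (hunion : ∀ b1 b2 : Bundle n, b1 ≠ ∅ → b2 ≠ ∅ → tz (b1 ∪ b2) ≤ max (tz b1) (tz b2))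
    {S : Finset (Bundle n)} (hS : MinimalOptimalMenu φ t0 t1 S) {b1 b2 : Bundle n}
    (hb1 : b1 ∈ S) (hb2 : b2 ∈ S) (htz : tz b1 ≤ tz b2) : b1 ⊆ b2 ∨ b2 ⊆ b1 := by
  by_contra! h
  obtain ⟨h12, h21⟩ := h
  have hb1e : b1 ≠ ∅ := by rintro rfl; exact h12 (Finset.empty_subset _)
  have hb2e : b2 ≠ ∅ := by rintro rfl; exact h21 (Finset.empty_subset _)
  have hne : b1 ≠ b2 := by rintro rfl; exact h12 subset_rfl
  have hue : b1 ∪ b2 ≠ ∅ := fun h => hb1e (Finset.union_eq_empty.1 h).1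
  obtain ⟨s1, hs1, -, hs1S⟩ := hS.exists_forall_lt hb1
  obtain ⟨s2, hs2, hs2max, hs2S⟩ := hS.exists_forall_lt hb2
  have h0S := hbd.empty_mem hS.1
  have h1 : 0 < φ b1 s1 := hbd.empty s1 hs1 ▸ hs1S ∅ h0S (Ne.symm hb1e)
  have h2 : 0 < φ b2 s2 := hbd.empty s2 hs2 ▸ hs2S ∅ h0S (Ne.symm hb2e)
  have hu : b1 ∪ b2 = b2 := by
    by_contra hu
    obtain ⟨t, ht, hne'⟩ := hdist _ _ hu
    refine hne' (hscd.eqOn_of_le_of_isStrictBest hbd.empty hcont hS.1 (hbd.tz_mem_Icc hb2e) hs2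
      (hbd.tz_lt_of_pos hmd hb2e hs2 h2).le (fun t ht hθt => ?_) (hs2max _) hs2S ?_
      (hs2S b1 hb1 hne) ht)
    · exact hbd.le_of_tz_le hmd hb2e hue
        ((hunion b1 b2 hb1e hb2e).trans (max_eq_right htz).le)
        (hmono _ _ Finset.subset_union_right) ht hθt
    · rw [hbd.tz_zero b2 hb2e]
      exact hbd.pos_at_tz hmd hb1e hb2e htz hs1 hs2 (hs1S b2 hb2 hne.symm) h1
        (hs2S b1 hb1 hne) h2
  exact h12 (hu ▸ Finset.subset_union_left)

lemma exists_tz_sup_le {ι : Type*}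
    (hunion : ∀ b1 b2 : Bundle n, b1 ≠ ∅ → b2 ≠ ∅ → tz (b1 ∪ b2) ≤ max (tz b1) (tz b2))
    {e : ι → Bundle n} {s : Finset ι} (hs : s.Nonempty) (he : ∀ i ∈ s, e i ≠ ∅) :
    ∃ i ∈ s, tz (s.sup e) ≤ tz (e i) := by
  induction hs using Finset.Nonempty.cons_induction with
  | singleton a => exact ⟨a, Finset.mem_singleton_self a, by simp⟩
  | cons a s has hs ih =>
    obtain ⟨i, hi, hle⟩ := ih fun i hi => he i (Finset.mem_cons_of_mem hi)
    have hsup : s.sup e ≠ ∅ := by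
      obtain ⟨j, hj⟩ := hs
      exact fun h => he j (Finset.mem_cons_of_mem hj)
        (Finset.subset_empty.1 (h ▸ Finset.le_sup hj))
    have key := hunion (e a) (s.sup e) (he a (Finset.mem_cons_self a s)) hsup
    rw [Finset.sup_cons]
    rcases le_total (tz (e a)) (tz (s.sup e)) with h | h
    · exact ⟨i, Finset.mem_cons_of_mem hi, (key.trans (max_eq_right h).le).trans hle⟩
    · exact ⟨a, Finset.mem_cons_self a s, key.trans (max_eq_left h).le⟩

lemma optimalMenu_of_exists_superset (hbd : Boundary φ t0 t1 tz) (hmd : MD φ t0 t1)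
    (hmono : ∀ b b' : Bundle n, b ⊆ b' → φ b t1 ≤ φ b' t1) {M : Finset (Bundle n)}
    (hM : ∅ ∈ M) (hsup : ∀ b : Bundle n, b ≠ ∅ → ∃ B ∈ M, b ⊆ B ∧ tz B ≤ tz b) :
    OptimalMenu φ t0 t1 M := by
  intro t ht
  obtain ⟨b, -, hb⟩ := Finset.exists_max_image Finset.univ (φ · t) Finset.univ_nonempty
  by_cases hpos : 0 < φ b t
  · have hbe : b ≠ ∅ := by rintro rfl; exact (hbd.empty t ht ▸ hpos).false
    obtain ⟨B, hBM, hbB, hBtz⟩ := hsup b hbe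
    have hBe : B ≠ ∅ := fun h => hbe (Finset.subset_empty.1 (h ▸ hbB))
    exact ⟨B, hBM, fun b' => (hb b' (Finset.mem_univ _)).trans
      (hbd.le_of_tz_le hmd hbe hBe hBtz (hmono _ _ hbB) ht (hbd.tz_lt_of_pos hmd hbe ht hpos).le)⟩
  · exact ⟨∅, hM, fun b' => hbd.empty t ht ▸ (hb b' (Finset.mem_univ _)).trans (not_lt.1 hpos)⟩

end

theorem stmt10_general {n : ℕ} (t0 t1 : ℝ) (ht : t0 < t1)
    (φ : Bundle n → ℝ → ℝ)
    (hcont : ∀ b : Bundle n, ContinuousOn (φ b) (Set.Icc t0 t1))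
    (hdist : Distinct φ t0 t1)
    (hmd : MD φ t0 t1)
    (hscd : SCDstar φ t0 t1)
    (hempty : ∀ t ∈ Set.Icc t0 t1, φ (∅ : Bundle n) t = 0)
    (hneg : ∀ b : Bundle n, b ≠ ∅ → φ b t0 < 0)
    (hpos : ∀ b : Bundle n, b ≠ ∅ → 0 < φ b t1)
    (tz : Bundle n → ℝ)
    (htz_mem : ∀ b : Bundle n, b ≠ ∅ → tz b ∈ Set.Ioo t0 t1)
    (htz_zero : ∀ b : Bundle n, b ≠ ∅ → φ b (tz b) = 0)
    (htz_uniq : ∀ b : Bundle n, b ≠ ∅ → ∀ s ∈ Set.Icc t0 t1, φ b s = 0 → s = tz b)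
    (hmono : ∀ b b' : Bundle n, b ⊆ b' → φ b t1 ≤ φ b' t1)
    (hunion : ∀ b1 b2 : Bundle n, b1 ≠ ∅ → b2 ≠ ∅ →
      tz (b1 ∪ b2) ≤ max (tz b1) (tz b2)) :
    (∀ S : Finset (Bundle n), MinimalOptimalMenu φ t0 t1 S → IsNestedMenu S) ∧
    (∀ e : ℕ → Bundle n,
      (∀ i, i < 2 ^ n - 1 → e i ≠ ∅) →
      (∀ b : Bundle n, b ≠ ∅ → ∃ i, i < 2 ^ n - 1 ∧ e i = b) →
      (∀ i j, i < 2 ^ n - 1 → j < 2 ^ n - 1 → e i = e j → i = j) →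
      (∀ i j, i ≤ j → j < 2 ^ n - 1 → tz (e i) ≤ tz (e j)) →
      OptimalMenu φ t0 t1
        (insert (∅ : Bundle n)
          ((Finset.range (2 ^ n - 1)).image fun k => (Finset.range (k + 1)).sup e))) := by
  have hbd : Boundary φ t0 t1 tz := ⟨ht, hempty, hneg, hpos, htz_mem, htz_zero, htz_uniq⟩
  refine ⟨fun S hS x hx y hy => ?_, fun e hne henum _ horder => ?_⟩
  · rcases le_total (tz x) (tz y) with h | h
    · exact subset_or_subset_of_tz_le hbd hmd hscd hcont hdist hmono hunion hS hx hy h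
    · exact (subset_or_subset_of_tz_le hbd hmd hscd hcont hdist hmono hunion hS hy hx h).symm
  refine optimalMenu_of_exists_superset hbd hmd hmono (Finset.mem_insert_self _ _) fun b hb => ?_
  obtain ⟨j, hj, rfl⟩ := henum b hb
  obtain ⟨i, hi, hle⟩ := exists_tz_sup_le hunion Finset.nonempty_range_add_one
    fun i hi => hne i ((Finset.mem_range_succ_iff.1 hi).trans_lt hj)
  exact ⟨_, Finset.mem_insert_of_mem (Finset.mem_image_of_mem _ (Finset.mem_range.2 hj)),
    Finset.le_sup (Finset.self_mem_range_succ j),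
    hle.trans (horder i j (Finset.mem_range_succ_iff.1 hi) hj)⟩

/-- **Theorem 6 (nested bundling).** Under MD, SCD*, the boundary assumptions,
monotonicity of the top type's valuation in set inclusion, and the union quantity
condition: (i) every minimal optimal menu is nested; and (ii) for any enumeration of
the nonempty bundles ordered by their sold-alone quantities, the menu of prefix unions
(together with ∅) is an optimal menu. -/
theorem stmt10 {n : ℕ} (hn : 1 ≤ n) (t0 t1 : ℝ) (ht : t0 < t1)
    (φ : Bundle n → ℝ → ℝ)
    (hcont : ∀ b : Bundle n, ContinuousOn (φ b) (Set.Icc t0 t1))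
    (hdist : Distinct φ t0 t1)
    (hmd : MD φ t0 t1)
    (hscd : SCDstar φ t0 t1)
    (hempty : ∀ t ∈ Set.Icc t0 t1, φ (∅ : Bundle n) t = 0)
    (hneg : ∀ b : Bundle n, b ≠ ∅ → φ b t0 < 0)
    (hpos : ∀ b : Bundle n, b ≠ ∅ → 0 < φ b t1)
    (tz : Bundle n → ℝ)
    (htz_mem : ∀ b : Bundle n, b ≠ ∅ → tz b ∈ Set.Ioo t0 t1)
    (htz_zero : ∀ b : Bundle n, b ≠ ∅ → φ b (tz b) = 0)
    (htz_uniq : ∀ b : Bundle n, b ≠ ∅ → ∀ s ∈ Set.Icc t0 t1, φ b s = 0 → s = tz b)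
    (hmono : ∀ b b' : Bundle n, b ⊆ b' → φ b t1 ≤ φ b' t1)
    (hunion : ∀ b1 b2 : Bundle n, b1 ≠ ∅ → b2 ≠ ∅ →
      tz (b1 ∪ b2) ≤ max (tz b1) (tz b2)) :
    (∀ S : Finset (Bundle n), MinimalOptimalMenu φ t0 t1 S → IsNestedMenu S) ∧
    (∀ e : ℕ → Bundle n,
      (∀ i, i < 2 ^ n - 1 → e i ≠ ∅) →
      (∀ b : Bundle n, b ≠ ∅ → ∃ i, i < 2 ^ n - 1 ∧ e i = b) →
      (∀ i j, i < 2 ^ n - 1 → j < 2 ^ n - 1 → e i = e j → i = j) →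
      (∀ i j, i ≤ j → j < 2 ^ n - 1 → tz (e i) ≤ tz (e j)) →
      OptimalMenu φ t0 t1
        (insert (∅ : Bundle n)
          ((Finset.range (2 ^ n - 1)).image fun k => (Finset.range (k + 1)).sup e))) :=
  stmt10_general t0 t1 ht φ hcont hdist hmd hscd hempty hneg hpos tz htz_mem htz_zero htz_uniq hmono
    hunion

end Paper
end

section
/- Assume MD, SCD*, and the boundary assumptions. Suppose there exists a nonempty bundle b_r such that: (1) t_{b_r} < t_b for every nonempty bundle b ≠ b_r (b_r has the strictly largest sold-alone quantity); and (2) for every bundle b with ¬(b_r ⊆ b), φ(b,t1) < φ(b_r,t1) (the top type values every bundle not containing b_r strictly below b_r). Then the minimal optimal menu is either a tree menu or a nested menu. -/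
/-!
A nonempty bundle `b` not containing `b_r` is never a best response: below `t_{b_r}` it loses to
`∅`, since `φ(b, ·)` is still negative there (`t_b > t_{b_r}`), while from `t_{b_r}` on it loses
to `b_r`, because the monotone difference `φ(b_r, ·) - φ(b, ·)` is positive at `t_{b_r}` and at
`t1`. So a minimal optimal menu drops every such `b`. It does contain `b_r`, which is the unique
best response just to the right of `t_{b_r}`, where every other nonempty bundle is still
negative. Hence `b_r` is a root of the menu, and a non-nested menu is a tree menu.
-/

namespace Paper

variable {n : ℕ}

open Filter Topology

section UniqueZero

variable {f : ℝ → ℝ} {a c z : ℝ}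

theorem neg_of_lt_of_unique_zero (hf : ContinuousOn f (Set.Icc a c)) (ha : f a < 0)
    (hz : ∀ s ∈ Set.Icc a c, f s = 0 → s = z) :
    ∀ s ∈ Set.Icc a c, s < z → f s < 0 := by
  intro s hs hsz
  by_contra! hfs
  obtain ⟨r, hr, hr0⟩ := intermediate_value_Icc hs.1
    (hf.mono (Set.Icc_subset_Icc_right hs.2)) ⟨ha.le, hfs⟩
  exact (hr.2.trans_lt hsz).ne (hz r ⟨hr.1, hr.2.trans hs.2⟩ hr0)

theorem pos_of_gt_of_unique_zero (hf : ContinuousOn f (Set.Icc a c)) (hc : 0 < f c)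
    (hz : ∀ s ∈ Set.Icc a c, f s = 0 → s = z) :
    ∀ s ∈ Set.Icc a c, z < s → 0 < f s := by
  intro s hs hzs
  by_contra! hfs
  obtain ⟨r, hr, hr0⟩ := intermediate_value_Icc hs.2
    (hf.mono (Set.Icc_subset_Icc_left hs.1)) ⟨hfs, hc.le⟩
  exact (hzs.trans_le hr.1).ne' (hz r ⟨hs.1.trans hr.1, hr.2⟩ hr0)

end UniqueZero

theorem min_le_of_monotoneOn_or_antitoneOn {g : ℝ → ℝ} {s : Set ℝ} {a c x : ℝ}
    (hg : MonotoneOn g s ∨ AntitoneOn g s) (ha : a ∈ s) (hc : c ∈ s) (hx : x ∈ s)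
    (hax : a ≤ x) (hxc : x ≤ c) : min (g a) (g c) ≤ g x := by
  rcases hg with hmono | hanti
  · exact min_le_of_left_le (hmono ha hx hax)
  · exact min_le_of_right_le (hanti hx hc hxc)

variable {φ : Bundle n → ℝ → ℝ} {t0 t1 : ℝ}

theorem OptimalMenu.mem_of_forall_lt {S : Finset (Bundle n)} (hS : OptimalMenu φ t0 t1 S)
    {b : Bundle n} {t : ℝ} (ht : t ∈ Set.Icc t0 t1) (hb : ∀ b' ≠ b, φ b' t < φ b t) :
    b ∈ S := by
  obtain ⟨w, hwS, hw⟩ := hS t ht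
  by_contra hbS
  exact (hw b).not_gt (hb w (ne_of_mem_of_not_mem hwS hbS))

theorem MinimalOptimalMenu.notMem_of_forall_exists_lt {S : Finset (Bundle n)}
    (hS : MinimalOptimalMenu φ t0 t1 S) {b : Bundle n}
    (hb : ∀ t ∈ Set.Icc t0 t1, ∃ b', φ b t < φ b' t) : b ∉ S := by
  intro hbS
  refine hS.2 (S.erase b) (Finset.erase_ssubset hbS) fun t ht => ?_
  obtain ⟨w, hwS, hw⟩ := hS.1 t ht
  obtain ⟨b', hb'⟩ := hb t ht
  exact ⟨w, Finset.mem_erase.mpr ⟨fun hwb => (hw b').not_gt (hwb ▸ hb'), hwS⟩, hw⟩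

theorem isTreeMenu_of_not_isNestedMenu {S : Finset (Bundle n)}
    (hS : ¬ IsNestedMenu S) {r : Bundle n} (hrS : r ∈ S) (hr : r ≠ ∅)
    (hroot : ∀ b ∈ S, b ≠ ∅ → r ⊆ b) : IsTreeMenu S := by
  simp only [IsNestedMenu, not_forall, not_or] at hS
  obtain ⟨b1, hb1, b2, hb2, h12, h21⟩ := hS
  exact ⟨⟨r, hrS, hr, hroot⟩, b1, hb1, b2, hb2, h12, h21⟩

theorem exists_forall_lt_of_least_zero (hcont : ∀ b : Bundle n, ContinuousOn (φ b) (Set.Icc t0 t1))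
    (hempty : ∀ t ∈ Set.Icc t0 t1, φ (∅ : Bundle n) t = 0)
    (hneg : ∀ b : Bundle n, b ≠ ∅ → φ b t0 < 0) (hpos : ∀ b : Bundle n, b ≠ ∅ → 0 < φ b t1)
    {tz : Bundle n → ℝ} (htz_mem : ∀ b : Bundle n, b ≠ ∅ → tz b ∈ Set.Ioo t0 t1)
    (htz_uniq : ∀ b : Bundle n, b ≠ ∅ → ∀ s ∈ Set.Icc t0 t1, φ b s = 0 → s = tz b)
    {br : Bundle n} (hbr : br ≠ ∅) (hroot1 : ∀ b : Bundle n, b ≠ ∅ → b ≠ br → tz br < tz b) :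
    ∃ t ∈ Set.Icc t0 t1, ∀ b ≠ br, φ b t < φ br t := by
  obtain ⟨hzr0, hzr1⟩ := htz_mem br hbr
  have hnear : ∀ᶠ t in 𝓝[>] tz br,
      tz br < t ∧ t < t1 ∧ ∀ b : Bundle n, b ≠ ∅ → b ≠ br → t < tz b := by
    refine eventually_mem_nhdsWithin.and
      (eventually_nhdsWithin_of_eventually_nhds ((eventually_lt_nhds hzr1).and ?_))
    refine eventually_all.mpr fun b => ?_
    by_cases hb : b ≠ ∅ ∧ b ≠ br
    · exact (eventually_lt_nhds (hroot1 b hb.1 hb.2)).mono fun _ h _ _ => h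
    · exact Eventually.of_forall fun _ h0 hbr' => absurd ⟨h0, hbr'⟩ hb
  obtain ⟨t, hzt, ht1, hlt⟩ := hnear.exists
  have ht : t ∈ Set.Icc t0 t1 := ⟨by linarith, ht1.le⟩
  have hbr_pos : 0 < φ br t :=
    pos_of_gt_of_unique_zero (hcont br) (hpos br hbr) (htz_uniq br hbr) t ht hzt
  refine ⟨t, ht, fun b hb => ?_⟩
  by_cases hb0 : b = ∅
  · rwa [hb0, hempty t ht]
  · exact (neg_of_lt_of_unique_zero (hcont b) (hneg b hb0) (htz_uniq b hb0) t ht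
      (hlt b hb0 hb)).trans hbr_pos

theorem forall_exists_lt_of_not_subset
    (hcont : ∀ b : Bundle n, ContinuousOn (φ b) (Set.Icc t0 t1)) (hmd : MD φ t0 t1)
    (hempty : ∀ t ∈ Set.Icc t0 t1, φ (∅ : Bundle n) t = 0)
    (hneg : ∀ b : Bundle n, b ≠ ∅ → φ b t0 < 0)
    {tz : Bundle n → ℝ} (htz_mem : ∀ b : Bundle n, b ≠ ∅ → tz b ∈ Set.Ioo t0 t1)
    (htz_zero : ∀ b : Bundle n, b ≠ ∅ → φ b (tz b) = 0)
    (htz_uniq : ∀ b : Bundle n, b ≠ ∅ → ∀ s ∈ Set.Icc t0 t1, φ b s = 0 → s = tz b)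
    {br : Bundle n} (hbr : br ≠ ∅) (hroot1 : ∀ b : Bundle n, b ≠ ∅ → b ≠ br → tz br < tz b)
    (hroot2 : ∀ b : Bundle n, ¬ br ⊆ b → φ b t1 < φ br t1)
    {b : Bundle n} (hb : b ≠ ∅) (hsub : ¬ br ⊆ b) :
    ∀ t ∈ Set.Icc t0 t1, ∃ b', φ b t < φ b' t := by
  have hbbr : b ≠ br := fun h => hsub h.superset
  have hneg_b := neg_of_lt_of_unique_zero (hcont b) (hneg b hb) (htz_uniq b hb)
  intro t ht
  by_cases hle : t ≤ tz br
  · refine ⟨∅, ?_⟩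
    rw [hempty t ht]
    exact hneg_b t ht (hle.trans_lt (hroot1 b hb hbbr))
  · refine ⟨br, sub_pos.mp ?_⟩
    have hzr : tz br ∈ Set.Icc t0 t1 := ⟨(htz_mem br hbr).1.le, (htz_mem br hbr).2.le⟩
    have hgap_zr : 0 < φ br (tz br) - φ b (tz br) := by
      rw [htz_zero br hbr, zero_sub, neg_pos]
      exact hneg_b (tz br) hzr (hroot1 b hb hbbr)
    have hgap_t1 : 0 < φ br t1 - φ b t1 := sub_pos.mpr (hroot2 b hsub)
    exact (lt_min hgap_zr hgap_t1).trans_le <| min_le_of_monotoneOn_or_antitoneOn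
      (g := fun s => φ br s - φ b s) (hmd br b) hzr ⟨ht.1.trans ht.2, le_rfl⟩ ht
      (not_le.mp hle).le ht.2

theorem stmt11_general {n : ℕ} (t0 t1 : ℝ)
    (φ : Bundle n → ℝ → ℝ)
    (hcont : ∀ b : Bundle n, ContinuousOn (φ b) (Set.Icc t0 t1))
    (hmd : MD φ t0 t1)
    (hempty : ∀ t ∈ Set.Icc t0 t1, φ (∅ : Bundle n) t = 0)
    (hneg : ∀ b : Bundle n, b ≠ ∅ → φ b t0 < 0)
    (hpos : ∀ b : Bundle n, b ≠ ∅ → 0 < φ b t1)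
    (tz : Bundle n → ℝ)
    (htz_mem : ∀ b : Bundle n, b ≠ ∅ → tz b ∈ Set.Ioo t0 t1)
    (htz_zero : ∀ b : Bundle n, b ≠ ∅ → φ b (tz b) = 0)
    (htz_uniq : ∀ b : Bundle n, b ≠ ∅ → ∀ s ∈ Set.Icc t0 t1, φ b s = 0 → s = tz b)
    (br : Bundle n) (hbr : br ≠ ∅)
    (hroot1 : ∀ b : Bundle n, b ≠ ∅ → b ≠ br → tz br < tz b)
    (hroot2 : ∀ b : Bundle n, ¬ br ⊆ b → φ b t1 < φ br t1) :
    ∀ S : Finset (Bundle n), MinimalOptimalMenu φ t0 t1 S →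
      IsTreeMenu S ∨ IsNestedMenu S := by
  intro S hS
  by_cases hnest : IsNestedMenu S
  · exact Or.inr hnest
  obtain ⟨t, ht, hbr_best⟩ := exists_forall_lt_of_least_zero hcont hempty hneg hpos htz_mem
    htz_uniq hbr hroot1
  have hroot : ∀ b ∈ S, b ≠ ∅ → br ⊆ b := fun b hbS hb => by
    by_contra hsub
    exact hS.notMem_of_forall_exists_lt (forall_exists_lt_of_not_subset hcont hmd hempty hneg
      htz_mem htz_zero htz_uniq hbr hroot1 hroot2 hb hsub) hbS
  exact Or.inl (isTreeMenu_of_not_isNestedMenu hnest (hS.1.mem_of_forall_lt ht hbr_best) hbr hroot)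

/-- **Proposition 33.** Under MD, SCD* and the boundary assumptions, if some nonempty
bundle b_r has the strictly largest sold-alone quantity and the top type values every
bundle not containing b_r strictly below b_r, then the minimal optimal menu is either
a tree menu or a nested menu. -/
theorem stmt11 {n : ℕ} (hn : 1 ≤ n) (t0 t1 : ℝ) (ht : t0 < t1)
    (φ : Bundle n → ℝ → ℝ)
    (hcont : ∀ b : Bundle n, ContinuousOn (φ b) (Set.Icc t0 t1))
    (hdist : Distinct φ t0 t1)
    (hmd : MD φ t0 t1)
    (hscd : SCDstar φ t0 t1)
    (hempty : ∀ t ∈ Set.Icc t0 t1, φ (∅ : Bundle n) t = 0)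
    (hneg : ∀ b : Bundle n, b ≠ ∅ → φ b t0 < 0)
    (hpos : ∀ b : Bundle n, b ≠ ∅ → 0 < φ b t1)
    (tz : Bundle n → ℝ)
    (htz_mem : ∀ b : Bundle n, b ≠ ∅ → tz b ∈ Set.Ioo t0 t1)
    (htz_zero : ∀ b : Bundle n, b ≠ ∅ → φ b (tz b) = 0)
    (htz_uniq : ∀ b : Bundle n, b ≠ ∅ → ∀ s ∈ Set.Icc t0 t1, φ b s = 0 → s = tz b)
    (br : Bundle n) (hbr : br ≠ ∅)
    (hroot1 : ∀ b : Bundle n, b ≠ ∅ → b ≠ br → tz br < tz b)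
    (hroot2 : ∀ b : Bundle n, ¬ br ⊆ b → φ b t1 < φ br t1) :
    ∀ S : Finset (Bundle n), MinimalOptimalMenu φ t0 t1 S →
      IsTreeMenu S ∨ IsNestedMenu S :=
  stmt11_general t0 t1 φ hcont hmd hempty hneg hpos tz htz_mem htz_zero htz_uniq br hbr hroot1
    hroot2

end Paper
end

section
/- Let B be a finite nonempty set, T = [t0,t1] ⊂ ℝ with t0 < t1, and φ : B × T → ℝ; for a probability vector a on B set φ(a,t) := Σ_{b∈B} a_b φ(b,t). Suppose: (i) for all probability vectors a, a' on B, the function t ↦ φ(a,t) − φ(a',t) is single-crossing on T (its sign is monotone in t); and (ii) there exist probability vectors a0, a0' on B and a constant c ≠ 0 with φ(a0,t) − φ(a0',t) = c for all t ∈ T. Then for all probability vectors a, a' on B, the function t ↦ φ(a,t) − φ(a',t) is monotone (nondecreasing or nonincreasing) on T. -/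
/-!
Mixing a pair `(a, a')` with the pair `(a0, a0')` of constant difference `c`, with weights
`l` and `1 - l`, turns the difference `g = φ(a, ·) - φ(a', ·)` into `l * (g + s c)` with
`s = (1 - l) / l ≥ 0`; swapping `a0` and `a0'` gives the negative shifts. Hence every vertical
translate `g + μ` is single crossing. A strict interior peak or valley of `g` would give a
translate with sign pattern `-, +, -` or `+, -, +`, so `g` is monotone.
-/

namespace Stmt15

variable {B : Type*} [Fintype B]

/-- A probability vector on the finite set B. -/
def IsStoch (a : B → ℝ) : Prop := (∀ b, 0 ≤ a b) ∧ ∑ b, a b = 1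

/-- Linear extension of φ to probability vectors. -/
def phiA (φ : B → ℝ → ℝ) (a : B → ℝ) (t : ℝ) : ℝ := ∑ b, a b * φ b t

/-- A function is single-crossing on a set: its sign is monotone there. -/
def SingleCrossingOn (g : ℝ → ℝ) (T : Set ℝ) : Prop :=
  MonotoneOn (fun t => Real.sign (g t)) T ∨ AntitoneOn (fun t => Real.sign (g t)) T

theorem sign_mul_of_pos {l : ℝ} (hl : 0 < l) (x : ℝ) : Real.sign (l * x) = Real.sign x := by
  rcases lt_trichotomy x 0 with hx | rfl | hx
  · rw [Real.sign_of_neg hx, Real.sign_of_neg (mul_neg_of_pos_of_neg hl hx)]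
  · rw [mul_zero]
  · rw [Real.sign_of_pos hx, Real.sign_of_pos (mul_pos hl hx)]

section SingleCrossing

variable {f g : ℝ → ℝ} {T : Set ℝ}

theorem SingleCrossingOn.congr_sign (hf : SingleCrossingOn f T)
    (h : ∀ t ∈ T, Real.sign (f t) = Real.sign (g t)) : SingleCrossingOn g T :=
  hf.imp (fun hm => hm.congr h) (fun hm => hm.congr h)

theorem SingleCrossingOn.mul_nonneg_of_mul_neg (hf : SingleCrossingOn f T) {x y z : ℝ}
    (hx : x ∈ T) (hy : y ∈ T) (hz : z ∈ T) (hxy : x ≤ y) (hyz : y ≤ z)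
    (hfxy : f x * f y < 0) : 0 ≤ f y * f z := by
  by_contra! hfyz
  have signs := hf.imp (fun hm => And.intro (hm hx hy hxy) (hm hy hz hyz))
    (fun hm => And.intro (hm hx hy hxy) (hm hy hz hyz))
  rcases mul_neg_iff.1 hfxy with ⟨hfx, hfy⟩ | ⟨hfx, hfy⟩
  · simp only [Real.sign_of_pos hfx, Real.sign_of_neg hfy,
      Real.sign_of_pos (pos_of_mul_neg_right hfyz hfy.le)] at signs
    norm_num at signs
  · simp only [Real.sign_of_neg hfx, Real.sign_of_pos hfy,
      Real.sign_of_neg (neg_of_mul_neg_right hfyz hfy.le)] at signs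
    norm_num at signs

theorem monotoneOn_or_antitoneOn_of_forall_singleCrossingOn_add
    (h : ∀ μ, SingleCrossingOn (fun t => f t + μ) T) : MonotoneOn f T ∨ AntitoneOn f T := by
  by_contra! hf
  obtain ⟨x, hx, y, hy, z, hz, hxy, hyz, hpeak | hvalley⟩ :=
    Set.not_monotoneOn_not_antitoneOn_iff_exists_lt_lt.1 hf
  · obtain ⟨μ, hμy, hμxz⟩ := exists_between (lt_min (neg_lt_neg hpeak.1) (neg_lt_neg hpeak.2))
    have := (h μ).mul_nonneg_of_mul_neg hx hy hz hxy.le hyz.le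
      (mul_neg_of_neg_of_pos (by linarith [min_le_left (-f x) (-f z)]) (by linarith))
    nlinarith [min_le_right (-f x) (-f z)]
  · obtain ⟨μ, hμxz, hμy⟩ :=
      exists_between (max_lt (neg_lt_neg hvalley.1) (neg_lt_neg hvalley.2))
    have := (h μ).mul_nonneg_of_mul_neg hx hy hz hxy.le hyz.le
      (mul_neg_of_pos_of_neg (by linarith [le_max_left (-f x) (-f z)]) (by linarith))
    nlinarith [le_max_right (-f x) (-f z)]

end SingleCrossing

section Mixtures

variable {φ : B → ℝ → ℝ} {T : Set ℝ}

theorem IsStoch.mix {a p : B → ℝ} (ha : IsStoch a) (hp : IsStoch p) {l : ℝ} (hl0 : 0 ≤ l)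
    (hl1 : l ≤ 1) : IsStoch (l • a + (1 - l) • p) :=
  convex_stdSimplex ℝ B ha hp hl0 (sub_nonneg.2 hl1) (add_sub_cancel l 1)

theorem phiA_add (a a' : B → ℝ) (t : ℝ) : phiA φ (a + a') t = phiA φ a t + phiA φ a' t := by
  simp only [phiA, Pi.add_apply, add_mul, Finset.sum_add_distrib]

theorem phiA_smul (l : ℝ) (a : B → ℝ) (t : ℝ) : phiA φ (l • a) t = l * phiA φ a t := by
  simp only [phiA, Pi.smul_apply, smul_eq_mul, Finset.mul_sum, mul_assoc]

theorem singleCrossingOn_add_mul_of_eqOn_const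
    (hscd : ∀ a a' : B → ℝ, IsStoch a → IsStoch a' →
      SingleCrossingOn (fun t => phiA φ a t - phiA φ a' t) T)
    {a a' p p' : B → ℝ} (ha : IsStoch a) (ha' : IsStoch a') (hp : IsStoch p) (hp' : IsStoch p')
    {c : ℝ} (hc : ∀ t ∈ T, phiA φ p t - phiA φ p' t = c) {s : ℝ} (hs : 0 ≤ s) :
    SingleCrossingOn (fun t => phiA φ a t - phiA φ a' t + s * c) T := by
  set l := (1 + s)⁻¹
  have hl0 : 0 < l := by positivity
  have hl1 : l ≤ 1 := inv_le_one_of_one_le₀ (by linarith)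
  refine (hscd _ _ (ha.mix hp hl0.le hl1) (ha'.mix hp' hl0.le hl1)).congr_sign fun t ht => ?_
  have hmix : phiA φ (l • a + (1 - l) • p) t - phiA φ (l • a' + (1 - l) • p') t
      = l * (phiA φ a t - phiA φ a' t + s * c) := by
    simp only [phiA_add, phiA_smul, ← hc t ht, l]
    field_simp
    ring
  rw [hmix, sign_mul_of_pos hl0]

theorem singleCrossingOn_add_const
    (hscd : ∀ a a' : B → ℝ, IsStoch a → IsStoch a' →
      SingleCrossingOn (fun t => phiA φ a t - phiA φ a' t) T)
    {p p' : B → ℝ} (hp : IsStoch p) (hp' : IsStoch p') {c : ℝ} (hc0 : c ≠ 0)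
    (hc : ∀ t ∈ T, phiA φ p t - phiA φ p' t = c) {a a' : B → ℝ} (ha : IsStoch a)
    (ha' : IsStoch a') (μ : ℝ) :
    SingleCrossingOn (fun t => phiA φ a t - phiA φ a' t + μ) T := by
  rcases le_total 0 (μ / c) with hs | hs
  · simpa only [div_mul_cancel₀ μ hc0] using
      singleCrossingOn_add_mul_of_eqOn_const hscd ha ha' hp hp' hc hs
  · have hc' : ∀ t ∈ T, phiA φ p' t - phiA φ p t = -c := fun t ht => by
      rw [← hc t ht, neg_sub]
    simpa only [neg_mul_neg, div_mul_cancel₀ μ hc0] using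
      singleCrossingOn_add_mul_of_eqOn_const hscd ha ha' hp' hp hc' (neg_nonneg.2 hs)

end Mixtures

theorem stmt15_general (t0 t1 : ℝ) (φ : B → ℝ → ℝ)
    (hscd : ∀ a a' : B → ℝ, IsStoch a → IsStoch a' →
      SingleCrossingOn (fun t => phiA φ a t - phiA φ a' t) (Set.Icc t0 t1))
    (hconst : ∃ (a0 a0' : B → ℝ) (c : ℝ), IsStoch a0 ∧ IsStoch a0' ∧ c ≠ 0 ∧
      ∀ t ∈ Set.Icc t0 t1, phiA φ a0 t - phiA φ a0' t = c) :
    ∀ a a' : B → ℝ, IsStoch a → IsStoch a' →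
      MonotoneOn (fun t => phiA φ a t - phiA φ a' t) (Set.Icc t0 t1) ∨
      AntitoneOn (fun t => phiA φ a t - phiA φ a' t) (Set.Icc t0 t1) := by
  obtain ⟨a0, a0', c, h0, h0', hc0, hc⟩ := hconst
  intro a a' ha ha'
  exact monotoneOn_or_antitoneOn_of_forall_singleCrossingOn_add
    (singleCrossingOn_add_const hscd h0 h0' hc0 hc ha ha')

/-- **Proposition.** If differences of φ-values of probability vectors are single
crossing on T, and some pair of probability vectors has constant nonzero difference
on T, then differences of φ-values of probability vectors are monotone on T. -/
theorem stmt15 [Nonempty B] (t0 t1 : ℝ) (ht : t0 < t1) (φ : B → ℝ → ℝ)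
    (hscd : ∀ a a' : B → ℝ, IsStoch a → IsStoch a' →
      SingleCrossingOn (fun t => phiA φ a t - phiA φ a' t) (Set.Icc t0 t1))
    (hconst : ∃ (a0 a0' : B → ℝ) (c : ℝ), IsStoch a0 ∧ IsStoch a0' ∧ c ≠ 0 ∧
      ∀ t ∈ Set.Icc t0 t1, phiA φ a0 t - phiA φ a0' t = c) :
    ∀ a a' : B → ℝ, IsStoch a → IsStoch a' →
      MonotoneOn (fun t => phiA φ a t - phiA φ a' t) (Set.Icc t0 t1) ∨
      AntitoneOn (fun t => phiA φ a t - phiA φ a' t) (Set.Icc t0 t1) :=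
  stmt15_general t0 t1 φ hscd hconst

end Stmt15
end

section
/- Let B be a finite nonempty set, T = [t0,t1] ⊂ ℝ with t0 < t1, and φ : B × T → ℝ with φ(b,·) continuously differentiable on T for each b ∈ B; for a probability vector a on B set φ(a,t) := Σ_{b∈B} a_b φ(b,t). If for every b ∈ B and every probability vector a on B the function t ↦ φ(b,t) − φ(a,t) is monotone (nondecreasing or nonincreasing) on T, then for all probability vectors a, a' on B, the function t ↦ φ(a,t) − φ(a',t) is monotone on T. -/
namespace Stmt16

variable {B : Type*} [Fintype B]

/-- A probability vector on the finite set B. -/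
def IsStoch (a : B → ℝ) : Prop := (∀ b, 0 ≤ a b) ∧ ∑ b, a b = 1

/-- Linear extension of φ to probability vectors. -/
def phiA (φ : B → ℝ → ℝ) (a : B → ℝ) (t : ℝ) : ℝ := ∑ b, a b * φ b t

open scoped Classical

/-- The stochastic vector `(1-μ)·δ_m + μ·δ_M`. -/
noncomputable def seg (m M : B) (μ : ℝ) : B → ℝ :=
  fun e => (if e = m then (1 - μ) else 0) + (if e = M then μ else 0)

lemma isStoch_seg (m M : B) (μ : ℝ) (h0 : 0 ≤ μ) (h1 : μ ≤ 1) :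
    IsStoch (seg m M μ) := by
  constructor
  · intro b
    unfold seg
    split_ifs <;> linarith
  · unfold seg
    rw [Finset.sum_add_distrib]
    simp

lemma seg_sum (m M : B) (μ : ℝ) (x : B → ℝ) :
    ∑ e, seg m M μ e * x e = (1 - μ) * x m + μ * x M := by
  unfold seg
  simp [add_mul, ite_mul, Finset.sum_add_distrib, Finset.sum_ite_eq']

lemma isStoch_dirac (b' : B) : IsStoch (fun e => if e = b' then (1:ℝ) else 0) := by
  constructor
  · intro b
    by_cases h : b = b' <;> simp [h]
  · simp

lemma dirac_sum (b' : B) (x : B → ℝ) :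
    ∑ e, (if e = b' then (1:ℝ) else 0) * x e = x b' := by
  simp [ite_mul, Finset.sum_ite_eq']

/-- Key finite-dimensional lemma: if for every `b` and every stochastic `c` the two
"increments" `x b - ⟨c,x⟩` and `y b - ⟨c,y⟩` have nonnegative product, then the same holds
for differences of stochastic vectors. -/
lemma key [Nonempty B] (x y : B → ℝ)
    (H : ∀ (b : B) (c : B → ℝ), IsStoch c →
      0 ≤ (x b - ∑ e, c e * x e) * (y b - ∑ e, c e * y e)) :
    ∀ a a' : B → ℝ, IsStoch a → IsStoch a' →
      0 ≤ ((∑ b, a b * x b) - (∑ b, a' b * x b)) *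
          ((∑ b, a b * y b) - (∑ b, a' b * y b)) := by
  -- pairwise comonotonicity
  have pair : ∀ b b' : B, 0 ≤ (x b - x b') * (y b - y b') := by
    intro b b'
    have := H b (fun e => if e = b' then (1:ℝ) else 0) (isStoch_dirac b')
    rwa [dirac_sum, dirac_sum] at this
  -- componentwise max point
  obtain ⟨M, -, hM⟩ := Finset.exists_max_image Finset.univ (fun b => x b + y b)
    ⟨Classical.arbitrary B, Finset.mem_univ _⟩
  obtain ⟨m, -, hm⟩ := Finset.exists_min_image Finset.univ (fun b => x b + y b)
    ⟨Classical.arbitrary B, Finset.mem_univ _⟩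
  have hMx : ∀ b, x b ≤ x M := by
    intro b; nlinarith [pair b M, hM b (Finset.mem_univ b)]
  have hMy : ∀ b, y b ≤ y M := by
    intro b; nlinarith [pair b M, hM b (Finset.mem_univ b)]
  have hmx : ∀ b, x m ≤ x b := by
    intro b; nlinarith [pair b m, hm b (Finset.mem_univ b)]
  have hmy : ∀ b, y m ≤ y b := by
    intro b; nlinarith [pair b m, hm b (Finset.mem_univ b)]
  have hΔx0 : 0 ≤ x M - x m := by linarith [hMx m]
  have hΔy0 : 0 ≤ y M - y m := by linarith [hMy m]
  -- collinearity: every point lies on the segment from (x m, y m) to (x M, y M)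
  have coll : ∀ b, (x b - x m) * (y M - y m) = (y b - y m) * (x M - x m) := by
    intro b
    rcases lt_trichotomy ((x b - x m) * (y M - y m) - (y b - y m) * (x M - x m)) 0 with hE | hE | hE
    · -- "above" the segment
      exfalso
      have hΔx : 0 < x M - x m := by
        rcases eq_or_lt_of_le hΔx0 with h' | h'
        · exfalso
          have hb : x b = x m := le_antisymm (by linarith [hMx b]) (hmx b)
          rw [hb, ← h'] at hE
          ring_nf at hE
          linarith
        · exact h'
      set μ0 : ℝ := (x b - x m) / (x M - x m) with hμ0def
      have hμ0m : μ0 * (x M - x m) = x b - x m := div_mul_cancel₀ _ (ne_of_gt hΔx)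
      have hμ00 : 0 ≤ μ0 := div_nonneg (by linarith [hmx b]) hΔx0
      have hμ01 : μ0 ≤ 1 := by
        rw [hμ0def, div_le_one hΔx]; linarith [hMx b]
      set δ : ℝ := (y b - y m) - μ0 * (y M - y m) with hδdef
      have h1 : δ * (x M - x m) = (y b - y m) * (x M - x m) - (x b - x m) * (y M - y m) := by
        rw [hδdef]
        linear_combination (-(y M - y m)) * hμ0m
      have hδ : 0 < δ := by nlinarith [h1]
      have hxbM : x b < x M := by
        rcases eq_or_lt_of_le (hMx b) with h' | h'
        · exfalso
          have hone : μ0 = 1 := by rw [hμ0def, h', div_self (ne_of_gt hΔx)]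
          rw [hone] at hδdef
          rw [hδdef] at hδ
          have := hMy b
          linarith
        · exact h'
      have hμ0lt1 : μ0 < 1 := by
        rw [hμ0def, div_lt_one hΔx]; linarith
      set ε : ℝ := min (1 - μ0) (δ / (y M - y m + 1)) with hεdef
      have hε : 0 < ε := lt_min (by linarith) (div_pos hδ (by linarith))
      have hεa : ε ≤ 1 - μ0 := min_le_left _ _
      have hεb : ε ≤ δ / (y M - y m + 1) := min_le_right _ _
      have hεy : ε * (y M - y m) < δ := by
        have h1 : ε * (y M - y m) ≤ (δ / (y M - y m + 1)) * (y M - y m) :=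
          mul_le_mul_of_nonneg_right hεb hΔy0
        have h2 : (δ / (y M - y m + 1)) * (y M - y m) < δ := by
          rw [div_mul_eq_mul_div, div_lt_iff₀ (by linarith)]
          nlinarith
        linarith
      have Hc := H b (seg m M (μ0 + ε)) (isStoch_seg m M (μ0 + ε) (by linarith) (by linarith))
      rw [seg_sum, seg_sum] at Hc
      have hA : x b - ((1 - (μ0 + ε)) * x m + (μ0 + ε) * x M) = -(ε * (x M - x m)) := by
        linear_combination -hμ0m
      have hB : y b - ((1 - (μ0 + ε)) * y m + (μ0 + ε) * y M) = δ - ε * (y M - y m) := by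
        rw [hδdef]; ring
      rw [hA, hB, neg_mul] at Hc
      have hpos : 0 < (ε * (x M - x m)) * (δ - ε * (y M - y m)) :=
        mul_pos (mul_pos hε hΔx) (by linarith)
      linarith
    · linarith
    · -- "below" the segment
      exfalso
      have hΔx : 0 < x M - x m := by
        rcases eq_or_lt_of_le hΔx0 with h' | h'
        · exfalso
          have hb : x b = x m := le_antisymm (by linarith [hMx b]) (hmx b)
          rw [hb, ← h'] at hE
          ring_nf at hE
          linarith
        · exact h'
      set μ0 : ℝ := (x b - x m) / (x M - x m) with hμ0def
      have hμ0m : μ0 * (x M - x m) = x b - x m := div_mul_cancel₀ _ (ne_of_gt hΔx)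
      have hμ00 : 0 ≤ μ0 := div_nonneg (by linarith [hmx b]) hΔx0
      have hμ01 : μ0 ≤ 1 := by
        rw [hμ0def, div_le_one hΔx]; linarith [hMx b]
      set δ : ℝ := μ0 * (y M - y m) - (y b - y m) with hδdef
      have h1 : δ * (x M - x m) = (x b - x m) * (y M - y m) - (y b - y m) * (x M - x m) := by
        rw [hδdef]
        linear_combination (y M - y m) * hμ0m
      have hδ : 0 < δ := by nlinarith [h1]
      have hxbm : x m < x b := by
        rcases eq_or_lt_of_le (hmx b) with h' | h'
        · exfalso
          have hzero : μ0 = 0 := by rw [hμ0def, ← h']; simp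
          rw [hzero] at hδdef
          rw [hδdef] at hδ
          have := hmy b
          linarith
        · exact h'
      have hμ0pos : 0 < μ0 := div_pos (by linarith) hΔx
      set ε : ℝ := min μ0 (δ / (y M - y m + 1)) with hεdef
      have hε : 0 < ε := lt_min hμ0pos (div_pos hδ (by linarith))
      have hεa : ε ≤ μ0 := min_le_left _ _
      have hεb : ε ≤ δ / (y M - y m + 1) := min_le_right _ _
      have hεy : ε * (y M - y m) < δ := by
        have h1 : ε * (y M - y m) ≤ (δ / (y M - y m + 1)) * (y M - y m) :=
          mul_le_mul_of_nonneg_right hεb hΔy0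
        have h2 : (δ / (y M - y m + 1)) * (y M - y m) < δ := by
          rw [div_mul_eq_mul_div, div_lt_iff₀ (by linarith)]
          nlinarith
        linarith
      have Hc := H b (seg m M (μ0 - ε)) (isStoch_seg m M (μ0 - ε) (by linarith) (by linarith))
      rw [seg_sum, seg_sum] at Hc
      have hA : x b - ((1 - (μ0 - ε)) * x m + (μ0 - ε) * x M) = ε * (x M - x m) := by
        linear_combination -hμ0m
      have hB : y b - ((1 - (μ0 - ε)) * y m + (μ0 - ε) * y M) = -(δ - ε * (y M - y m)) := by
        rw [hδdef]; ring
      rw [hA, hB, mul_neg] at Hc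
      have hpos : 0 < (ε * (x M - x m)) * (δ - ε * (y M - y m)) :=
        mul_pos (mul_pos hε hΔx) (by linarith)
      linarith
  -- final computation
  intro a a' ha ha'
  have hX : (∑ b, a b * x b) - (∑ b, a' b * x b) = ∑ b, (a b - a' b) * (x b - x m) := by
    have h1 : ∑ b, (a b - a' b) * (x b - x m)
        = (∑ b, a b * x b) - (∑ b, a' b * x b) - ((∑ b, a b) - (∑ b, a' b)) * x m := by
      rw [sub_mul, Finset.sum_mul, Finset.sum_mul]
      rw [← Finset.sum_sub_distrib, ← Finset.sum_sub_distrib, ← Finset.sum_sub_distrib]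
      apply Finset.sum_congr rfl
      intro b _
      ring
    rw [h1, ha.2, ha'.2]
    ring
  have hY : (∑ b, a b * y b) - (∑ b, a' b * y b) = ∑ b, (a b - a' b) * (y b - y m) := by
    have h1 : ∑ b, (a b - a' b) * (y b - y m)
        = (∑ b, a b * y b) - (∑ b, a' b * y b) - ((∑ b, a b) - (∑ b, a' b)) * y m := by
      rw [sub_mul, Finset.sum_mul, Finset.sum_mul]
      rw [← Finset.sum_sub_distrib, ← Finset.sum_sub_distrib, ← Finset.sum_sub_distrib]
      apply Finset.sum_congr rfl
      intro b _
      ring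
    rw [h1, ha.2, ha'.2]
    ring
  rw [hX, hY]
  set X : ℝ := ∑ b, (a b - a' b) * (x b - x m) with hXdef
  set Y : ℝ := ∑ b, (a b - a' b) * (y b - y m) with hYdef
  have hXY : X * (y M - y m) = Y * (x M - x m) := by
    rw [hXdef, hYdef, Finset.sum_mul, Finset.sum_mul]
    apply Finset.sum_congr rfl
    intro b _
    linear_combination (a b - a' b) * coll b
  rcases eq_or_lt_of_le hΔx0 with h' | h'
  · -- all x equal, X = 0
    have hX0 : X = 0 := by
      rw [hXdef]
      apply Finset.sum_eq_zero
      intro b _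
      have hb : x b = x m := le_antisymm (by linarith [hMx b]) (hmx b)
      rw [hb]; ring
    rw [hX0]; simp
  · have h1 : 0 ≤ (X * Y) * (x M - x m) := by
      have e1 : (X * Y) * (x M - x m) = X * (Y * (x M - x m)) := by ring
      rw [e1, ← hXY]
      have e2 : X * (X * (y M - y m)) = X ^ 2 * (y M - y m) := by ring
      rw [e2]
      positivity
    nlinarith

/-- **Proposition.** If, for every b ∈ B and every probability vector a, the difference
φ(b,·) − φ(a,·) is monotone on T, then the difference φ(a,·) − φ(a',·) is monotone
on T for all probability vectors a, a'. -/
theorem stmt16 [Nonempty B] (t0 t1 : ℝ) (ht : t0 < t1) (φ φd : B → ℝ → ℝ)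
    (hderiv : ∀ b : B, ∀ t ∈ Set.Icc t0 t1,
      HasDerivWithinAt (φ b) (φd b t) (Set.Icc t0 t1) t)
    (hcont : ∀ b : B, ContinuousOn (φd b) (Set.Icc t0 t1))
    (h : ∀ (b : B) (a : B → ℝ), IsStoch a →
      MonotoneOn (fun t => φ b t - phiA φ a t) (Set.Icc t0 t1) ∨
      AntitoneOn (fun t => φ b t - phiA φ a t) (Set.Icc t0 t1)) :
    ∀ a a' : B → ℝ, IsStoch a → IsStoch a' →
      MonotoneOn (fun t => phiA φ a t - phiA φ a' t) (Set.Icc t0 t1) ∨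
      AntitoneOn (fun t => phiA φ a t - phiA φ a' t) (Set.Icc t0 t1) := by
  intro a a' ha ha'
  -- increments of phiA
  have hinc : ∀ (c : B → ℝ) (s t : ℝ),
      phiA φ c t - phiA φ c s = ∑ e, c e * (φ e t - φ e s) := by
    intro c s t
    unfold phiA
    rw [← Finset.sum_sub_distrib]
    apply Finset.sum_congr rfl
    intro e _
    ring
  -- all pairs of increments of the target function have nonnegative product
  have main : ∀ s ∈ Set.Icc t0 t1, ∀ t ∈ Set.Icc t0 t1, ∀ u ∈ Set.Icc t0 t1,
      ∀ v ∈ Set.Icc t0 t1, s ≤ t → u ≤ v →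
      0 ≤ ((phiA φ a t - phiA φ a' t) - (phiA φ a s - phiA φ a' s)) *
          ((phiA φ a v - phiA φ a' v) - (phiA φ a u - phiA φ a' u)) := by
    intro s hs t htt u hu v hv hst huv
    have hk := key (fun b => φ b t - φ b s) (fun b => φ b v - φ b u) ?_ a a' ha ha'
    · have e1 : (∑ b, a b * (φ b t - φ b s)) - (∑ b, a' b * (φ b t - φ b s))
          = (phiA φ a t - phiA φ a' t) - (phiA φ a s - phiA φ a' s) := by
        rw [← hinc, ← hinc]; ring
      have e2 : (∑ b, a b * (φ b v - φ b u)) - (∑ b, a' b * (φ b v - φ b u))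
          = (phiA φ a v - phiA φ a' v) - (phiA φ a u - phiA φ a' u) := by
        rw [← hinc, ← hinc]; ring
      rw [e1, e2] at hk
      exact hk
    · intro b c hc
      have hc1 : ∑ e, c e * (φ e t - φ e s) = phiA φ c t - phiA φ c s := (hinc c s t).symm
      have hc2 : ∑ e, c e * (φ e v - φ e u) = phiA φ c v - phiA φ c u := (hinc c u v).symm
      rw [hc1, hc2]
      beta_reduce
      rcases h b c hc with hmono | hanti
      · have h1 := hmono hs htt hst
        have h2 := hmono hu hv huv
        simp only at h1 h2
        nlinarith [mul_nonneg (sub_nonneg.2 h1) (sub_nonneg.2 h2)]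
      · have h1 := hanti hs htt hst
        have h2 := hanti hu hv huv
        simp only at h1 h2
        nlinarith [mul_nonneg (sub_nonneg.2 h1) (sub_nonneg.2 h2)]
  by_cases hmono : MonotoneOn (fun t => phiA φ a t - phiA φ a' t) (Set.Icc t0 t1)
  · exact Or.inl hmono
  · right
    unfold MonotoneOn at hmono
    push_neg at hmono
    obtain ⟨s, hs, t, htt, hst, hFts⟩ := hmono
    intro u hu v hv huv
    have hk := main s hs t htt u hu v hv hst huv
    simp only at hFts ⊢
    nlinarith
end Stmt16
end

section
/- Let t0 < t1 be real numbers and let z : ℝ → ℝ be continuously differentiable on [t0,t1]. Then z is strictly quasi-concave on [t0,t1] if and only if: (i) there do not exist t < t' in [t0,t1] with z'(t) < 0 and z'(t') > 0; and (ii) z' does not vanish identically on any nondegenerate subinterval of [t0,t1]. -/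
/-!
On an interval, strict quasi-concavity of a continuous `z` says that no point strictly between
`x < y` minimizes `z` on `[x, y]`. A sign change `z' t < 0 < z' t'` pushes the minimum of `z` on
`[t, t']` into the interior, and `z' = 0` on `[u, v]` makes `z` constant there. Conversely, at an
interior minimizer `m` condition (ii) provides points on both sides of `m` where `z' ≠ 0`; by
Fermat's theorem `z` is strictly larger there than at `m`, so the mean value theorem yields a
point left of `m` with `z' < 0` and one right of `m` with `z' > 0`, against condition (i).
-/

open Set Filter Topology

def IsStrictlyQuasiconcaveOn (s : Set ℝ) (z : ℝ → ℝ) : Prop :=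
  ∀ x ∈ s, ∀ y ∈ s, x < y → ∀ c ∈ Ioo x y, min (z x) (z y) < z c

theorem isStrictlyQuasiconcaveOn_iff {s : Set ℝ} {z : ℝ → ℝ} :
    IsStrictlyQuasiconcaveOn s z ↔ ∀ x ∈ s, ∀ y ∈ s, x ≠ y → ∀ σ ∈ Ioo (0 : ℝ) 1,
      min (z x) (z y) < z (σ * x + (1 - σ) * y) := by
  constructor
  · intro h x hx y hy hxy σ hσ
    rcases hxy.lt_or_gt with hlt | hgt
    · exact h x hx y hy hlt _ <|
        (Convex.mem_Ioo hlt).2 ⟨σ, 1 - σ, hσ.1, by linarith [hσ.2], by ring, rfl⟩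
    · rw [min_comm]
      exact h y hy x hx hgt _ <|
        (Convex.mem_Ioo hgt).2 ⟨1 - σ, σ, by linarith [hσ.2], hσ.1, by ring, by ring⟩
  · intro h x hx y hy hxy c hc
    obtain ⟨σ, τ, hσ, hτ, hστ, rfl⟩ := (Convex.mem_Ioo hxy).1 hc
    obtain rfl : τ = 1 - σ := by linarith
    exact h x hx y hy hxy.ne σ ⟨hσ, by linarith⟩

section Interval

variable {a b c d m t : ℝ} {z zd : ℝ → ℝ}

theorem IsMinOn.hasDerivWithinAt_nonneg_of_left (h : IsMinOn z (Icc a b) a)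
    (hd : HasDerivWithinAt z d (Icc a b) a) (hab : a < b) : 0 ≤ d := by
  have := h.localize.hasFDerivWithinAt_nonneg hd.hasFDerivWithinAt
    (sub_mem_posTangentConeAt_of_segment_subset
      ((convex_Icc a b).segment_subset (left_mem_Icc.2 hab.le) (right_mem_Icc.2 hab.le)))
  rw [ContinuousLinearMap.toSpanSingleton_apply, smul_eq_mul] at this
  exact nonneg_of_mul_nonneg_right this (sub_pos.2 hab)

theorem IsMinOn.hasDerivWithinAt_nonpos_of_right (h : IsMinOn z (Icc a b) b)
    (hd : HasDerivWithinAt z d (Icc a b) b) (hab : a < b) : d ≤ 0 := by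
  have := h.localize.hasFDerivWithinAt_nonneg hd.hasFDerivWithinAt
    (sub_mem_posTangentConeAt_of_segment_subset
      ((convex_Icc a b).segment_subset (right_mem_Icc.2 hab.le) (left_mem_Icc.2 hab.le)))
  rw [ContinuousLinearMap.toSpanSingleton_apply, smul_eq_mul] at this
  exact nonpos_of_mul_nonneg_right this (sub_neg.2 hab)

theorem IsMinOn.lt_of_hasDerivAt_ne_zero (h : IsMinOn z (Icc a b) m) (ht : t ∈ Ioo a b)
    (hd : HasDerivAt z d t) (hd0 : d ≠ 0) : z m < z t := by
  refine (h (Ioo_subset_Icc_self ht)).lt_of_ne fun heq => hd0 (IsLocalMin.hasDerivAt_eq_zero ?_ hd)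
  filter_upwards [Icc_mem_nhds ht.1 ht.2] with w hw
  exact heq ▸ h hw

theorem exists_hasDerivAt_neg_of_lt (hab : a < b) (hz : z b < z a)
    (hc : ContinuousOn z (Icc a b)) (hd : ∀ t ∈ Ioo a b, HasDerivAt z (zd t) t) :
    ∃ c ∈ Ioo a b, zd c < 0 := by
  obtain ⟨c, hc, heq⟩ := exists_hasDerivAt_eq_slope z zd hab hc hd
  exact ⟨c, hc, heq ▸ div_neg_of_neg_of_pos (by linarith) (by linarith)⟩

theorem exists_hasDerivAt_pos_of_lt (hab : a < b) (hz : z a < z b)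
    (hc : ContinuousOn z (Icc a b)) (hd : ∀ t ∈ Ioo a b, HasDerivAt z (zd t) t) :
    ∃ c ∈ Ioo a b, 0 < zd c := by
  obtain ⟨c, hc, heq⟩ := exists_hasDerivAt_eq_slope z zd hab hc hd
  exact ⟨c, hc, heq ▸ div_pos (by linarith) (by linarith)⟩

theorem min_lt_of_forall_not_isMinOn (hz : ContinuousOn z (Icc a b)) (hc : c ∈ Ioo a b)
    (h : ∀ m ∈ Ioo a b, ¬ IsMinOn z (Icc a b) m) : min (z a) (z b) < z c := by
  obtain ⟨m, hm, hmin⟩ :=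
    isCompact_Icc.exists_isMinOn (nonempty_Icc.2 (hc.1.trans hc.2).le) hz
  have hzm : min (z a) (z b) ≤ z m := by
    rcases eq_endpoints_or_mem_Ioo_of_mem_Icc hm with rfl | rfl | hm'
    · exact min_le_left _ _
    · exact min_le_right _ _
    · exact absurd hmin (h m hm')
  by_contra! hle
  exact h c hc fun w hw => hle.trans (hzm.trans (hmin hw))

end Interval

section Proposition

variable {t0 t1 : ℝ} {z zd : ℝ → ℝ}

theorem not_exists_deriv_neg_pos
    (hderiv : ∀ t ∈ Icc t0 t1, HasDerivWithinAt z (zd t) (Icc t0 t1) t)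
    (hq : IsStrictlyQuasiconcaveOn (Icc t0 t1) z) :
    ¬ ∃ t ∈ Icc t0 t1, ∃ t' ∈ Icc t0 t1, t < t' ∧ zd t < 0 ∧ 0 < zd t' := by
  rintro ⟨t, ht, t', ht', htt', hneg, hpos⟩
  have hsub : Icc t t' ⊆ Icc t0 t1 := Icc_subset_Icc ht.1 ht'.2
  obtain ⟨m, hm, hmin⟩ := isCompact_Icc.exists_isMinOn (nonempty_Icc.2 htt'.le)
    fun s hs => ((hderiv s (hsub hs)).mono hsub).continuousWithinAt
  have hmt : t ≠ m := by
    rintro rfl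
    exact hneg.not_ge (hmin.hasDerivWithinAt_nonneg_of_left ((hderiv t ht).mono hsub) htt')
  have hmt' : m ≠ t' := by
    rintro rfl
    exact hpos.not_ge (hmin.hasDerivWithinAt_nonpos_of_right ((hderiv m ht').mono hsub) htt')
  exact (hq t ht t' ht' htt' m ⟨hm.1.lt_of_ne hmt, hm.2.lt_of_ne hmt'⟩).not_ge
    (le_min (hmin (left_mem_Icc.2 htt'.le)) (hmin (right_mem_Icc.2 htt'.le)))

theorem not_exists_deriv_eq_zero_on_Icc
    (hderiv : ∀ t ∈ Icc t0 t1, HasDerivWithinAt z (zd t) (Icc t0 t1) t)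
    (hq : IsStrictlyQuasiconcaveOn (Icc t0 t1) z) :
    ¬ ∃ u v : ℝ, t0 ≤ u ∧ u < v ∧ v ≤ t1 ∧ ∀ s ∈ Icc u v, zd s = 0 := by
  rintro ⟨u, v, hu, huv, hv, hzero⟩
  have hsub : Icc u v ⊆ Icc t0 t1 := Icc_subset_Icc hu hv
  have hconst : ∀ w ∈ Icc u v, z w = z u := fun w hw => by
    simpa [sub_eq_zero] using Convex.norm_image_sub_le_of_norm_hasDerivWithin_le (C := 0)
      (fun x hx => (hderiv x (hsub hx)).mono hsub) (fun x hx => by simp [hzero x hx])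
      (convex_Icc u v) (left_mem_Icc.2 huv.le) hw
  have hmid : (u + v) / 2 ∈ Ioo u v := ⟨by linarith, by linarith⟩
  have := hq u (hsub (left_mem_Icc.2 huv.le)) v (hsub (right_mem_Icc.2 huv.le)) huv _ hmid
  rw [hconst v (right_mem_Icc.2 huv.le), hconst _ (Ioo_subset_Icc_self hmid), min_self] at this
  exact this.false

theorem exists_mem_Ioo_deriv_ne_zero
    (hii : ¬ ∃ u v : ℝ, t0 ≤ u ∧ u < v ∧ v ≤ t1 ∧ ∀ s ∈ Icc u v, zd s = 0)
    {a b : ℝ} (ha : t0 ≤ a) (hab : a < b) (hb : b ≤ t1) : ∃ t ∈ Ioo a b, zd t ≠ 0 := by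
  by_contra! h
  exact hii ⟨(2 * a + b) / 3, (a + 2 * b) / 3, by linarith, by linarith, by linarith,
    fun s hs => h s ⟨by linarith [hs.1], by linarith [hs.2]⟩⟩

theorem not_isMinOn_of_mem_Ioo (hz : ContinuousOn z (Icc t0 t1))
    (hd : ∀ t ∈ Ioo t0 t1, HasDerivAt z (zd t) t)
    (hi : ¬ ∃ t ∈ Icc t0 t1, ∃ t' ∈ Icc t0 t1, t < t' ∧ zd t < 0 ∧ 0 < zd t')
    (hii : ¬ ∃ u v : ℝ, t0 ≤ u ∧ u < v ∧ v ≤ t1 ∧ ∀ s ∈ Icc u v, zd s = 0)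
    {a b m : ℝ} (ha : t0 ≤ a) (hb : b ≤ t1) (hm : m ∈ Ioo a b) :
    ¬ IsMinOn z (Icc a b) m := by
  intro hmin
  have hIoo : ∀ {p q}, a ≤ p → q ≤ b → ∀ s ∈ Ioo p q, HasDerivAt z (zd s) s :=
    fun hp hq s hs => hd s ⟨by linarith [hs.1], by linarith [hs.2]⟩
  have hIcc : ∀ {p q}, a ≤ p → q ≤ b → ContinuousOn z (Icc p q) :=
    fun hp hq => hz.mono (Icc_subset_Icc (by linarith) (by linarith))
  obtain ⟨t, ht, hzt⟩ := exists_mem_Ioo_deriv_ne_zero hii ha hm.1 (by linarith [hm.2])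
  obtain ⟨t', ht', hzt'⟩ := exists_mem_Ioo_deriv_ne_zero hii (by linarith [hm.1]) hm.2 hb
  have hlt := hmin.lt_of_hasDerivAt_ne_zero ⟨ht.1, ht.2.trans hm.2⟩
    (hIoo le_rfl le_rfl t ⟨ht.1, ht.2.trans hm.2⟩) hzt
  have hlt' := hmin.lt_of_hasDerivAt_ne_zero ⟨hm.1.trans ht'.1, ht'.2⟩
    (hIoo le_rfl le_rfl t' ⟨hm.1.trans ht'.1, ht'.2⟩) hzt'
  obtain ⟨c, hc, hneg⟩ := exists_hasDerivAt_neg_of_lt ht.2 hlt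
    (hIcc ht.1.le hm.2.le) (hIoo ht.1.le hm.2.le)
  obtain ⟨c', hc', hpos⟩ := exists_hasDerivAt_pos_of_lt ht'.1 hlt'
    (hIcc hm.1.le ht'.2.le) (hIoo hm.1.le ht'.2.le)
  exact hi ⟨c, ⟨by linarith [ht.1, hc.1], by linarith [hc.2, hm.2]⟩,
    c', ⟨by linarith [hm.1, hc'.1], by linarith [hc'.2, ht'.2]⟩, by linarith [hc.2, hc'.1],
    hneg, hpos⟩

end Proposition

theorem stmt19_general (t0 t1 : ℝ) (z zd : ℝ → ℝ)
    (hderiv : ∀ t ∈ Set.Icc t0 t1, HasDerivWithinAt z (zd t) (Set.Icc t0 t1) t) :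
    (∀ x ∈ Set.Icc t0 t1, ∀ y ∈ Set.Icc t0 t1, x ≠ y → ∀ s ∈ Set.Ioo (0 : ℝ) 1,
        min (z x) (z y) < z (s * x + (1 - s) * y)) ↔
      ((¬ ∃ t ∈ Set.Icc t0 t1, ∃ t' ∈ Set.Icc t0 t1,
          t < t' ∧ zd t < 0 ∧ 0 < zd t') ∧
       (¬ ∃ u v : ℝ, t0 ≤ u ∧ u < v ∧ v ≤ t1 ∧ ∀ s ∈ Set.Icc u v, zd s = 0)) := by
  rw [← isStrictlyQuasiconcaveOn_iff]
  refine ⟨fun hq => ⟨not_exists_deriv_neg_pos hderiv hq,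
    not_exists_deriv_eq_zero_on_Icc hderiv hq⟩, fun ⟨hi, hii⟩ x hx y hy _ c hc => ?_⟩
  have hz : ContinuousOn z (Icc t0 t1) := fun t ht => (hderiv t ht).continuousWithinAt
  have hd : ∀ t ∈ Ioo t0 t1, HasDerivAt z (zd t) t := fun t ht =>
    (hderiv t (Ioo_subset_Icc_self ht)).hasDerivAt (Icc_mem_nhds ht.1 ht.2)
  exact min_lt_of_forall_not_isMinOn (hz.mono (Icc_subset_Icc hx.1 hy.2)) hc
    fun m hm => not_isMinOn_of_mem_Ioo hz hd hi hii hx.1 hy.2 hm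

/-- **Proposition 11.** A continuously differentiable function z on [t0,t1] is strictly
quasi-concave there if and only if (i) its derivative is never negative at a point and
positive at a later point, and (ii) its derivative does not vanish identically on any
nondegenerate subinterval. -/
theorem stmt19 (t0 t1 : ℝ) (ht : t0 < t1) (z zd : ℝ → ℝ)
    (hderiv : ∀ t ∈ Set.Icc t0 t1, HasDerivWithinAt z (zd t) (Set.Icc t0 t1) t)
    (hcont : ContinuousOn zd (Set.Icc t0 t1)) :
    (∀ x ∈ Set.Icc t0 t1, ∀ y ∈ Set.Icc t0 t1, x ≠ y → ∀ s ∈ Set.Ioo (0 : ℝ) 1,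
        min (z x) (z y) < z (s * x + (1 - s) * y)) ↔
      ((¬ ∃ t ∈ Set.Icc t0 t1, ∃ t' ∈ Set.Icc t0 t1,
          t < t' ∧ zd t < 0 ∧ 0 < zd t') ∧
       (¬ ∃ u v : ℝ, t0 ≤ u ∧ u < v ∧ v ≤ t1 ∧ ∀ s ∈ Set.Icc u v, zd s = 0)) :=
  stmt19_general t0 t1 z zd hderiv
end
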